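/- arXiv:2402.18214 — 2 statements merged into one kernel-verified Lean document; each statement's English description precedes it below -/
import Mathlib

section
/- Let G be a finite simple connected non-complete graph and let u, v be two non-adjacent vertices of G. Let x ∈ V(G) \ (N[u] ∪ N[v]) be a vertex such that xy ∈ E(G) for some y ∈ WT_G(u,v) \ {u,v}. Then x ∈ WT_G(u,v). -/
open SimpleGraph

/-- A walk `w : u → v` is a *weakly toll walk* if every vertex of the walk adjacent to `u`
equals the second vertex of the walk, and every vertex of the walk adjacent to `v` equals the
second-to-last vertex of the walk. -/
def IsWeaklyTollWalk {V : Type*} (G : SimpleGraph V) {u v : V} (w : G.Walk u v) : Prop :=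
  (∀ i ≤ w.length, G.Adj u (w.getVert i) → w.getVert i = w.getVert 1) ∧
  (∀ i ≤ w.length, G.Adj (w.getVert i) v → w.getVert i = w.getVert (w.length - 1))

/-- The weakly toll interval `WT_G(u,v)`: all vertices lying on some weakly toll walk
between `u` and `v`. -/
def wtInterval {V : Type*} (G : SimpleGraph V) (u v : V) : Set V :=
  {x | ∃ w : G.Walk u v, IsWeaklyTollWalk G w ∧ x ∈ w.support}

/-- `WT(S)`: the union of the weakly toll intervals between pairs of vertices of `S`. -/
def wtClosure {V : Type*} (G : SimpleGraph V) (S : Set V) : Set V :=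
  ⋃ u ∈ S, ⋃ v ∈ S, wtInterval G u v

/-- `S` is a weakly toll set if the weakly toll intervals between its members cover `V(G)`. -/
def IsWeaklyTollSet {V : Type*} (G : SimpleGraph V) (S : Set V) : Prop :=
  wtClosure G S = Set.univ

/-- The weakly toll number: the minimum cardinality of a weakly toll set. -/
noncomputable def wtn {V : Type*} (G : SimpleGraph V) : ℕ :=
  sInf {n | ∃ S : Set V, IsWeaklyTollSet G S ∧ S.ncard = n}

/-- The weakly toll convex hull of `S`: the union of the iterates `WT^k(S)`. -/
def wtHull {V : Type*} (G : SimpleGraph V) (S : Set V) : Set V :=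
  ⋃ k : ℕ, (wtClosure G)^[k] S

/-- `S` is a weakly toll hull set if its weakly toll convex hull is all of `V(G)`. -/
def IsWeaklyTollHullSet {V : Type*} (G : SimpleGraph V) (S : Set V) : Prop :=
  wtHull G S = Set.univ

/-- The weakly toll hull number: the minimum cardinality of a weakly toll hull set. -/
noncomputable def wth {V : Type*} (G : SimpleGraph V) : ℕ :=
  sInf {n | ∃ S : Set V, IsWeaklyTollHullSet G S ∧ S.ncard = n}

/-- A walk `w : u → v` is a *semi weakly toll walk* if every vertex of the walk adjacent to `u`
equals the second vertex of the walk (no condition at `v`). -/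
def IsSemiWeaklyTollWalk {V : Type*} (G : SimpleGraph V) {u v : V} (w : G.Walk u v) : Prop :=
  ∀ i ≤ w.length, G.Adj u (w.getVert i) → w.getVert i = w.getVert 1

/-- The semi weakly toll interval `SWT_G(u,v)`. -/
def swtInterval {V : Type*} (G : SimpleGraph V) (u v : V) : Set V :=
  {x | ∃ w : G.Walk u v, IsSemiWeaklyTollWalk G w ∧ x ∈ w.support}

/-- The strong product of two simple graphs. -/
def strongProd {V W : Type*} (G : SimpleGraph V) (H : SimpleGraph W) :
    SimpleGraph (V × W) where
  Adj p q := (G.Adj p.1 q.1 ∧ p.2 = q.2) ∨ (p.1 = q.1 ∧ H.Adj p.2 q.2) ∨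
    (G.Adj p.1 q.1 ∧ H.Adj p.2 q.2)
  symm := by
    constructor
    rintro p q (⟨h1, h2⟩ | ⟨h1, h2⟩ | ⟨h1, h2⟩)
    · exact Or.inl ⟨h1.symm, h2.symm⟩
    · exact Or.inr (Or.inl ⟨h1.symm, h2.symm⟩)
    · exact Or.inr (Or.inr ⟨h1.symm, h2.symm⟩)
  loopless := by
    constructor
    rintro p (⟨h, -⟩ | ⟨-, h⟩ | ⟨h, -⟩)
    · exact G.irrefl h
    · exact H.irrefl h
    · exact G.irrefl h

/-- The lexicographic product of two simple graphs. -/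
def lexProd {V W : Type*} (G : SimpleGraph V) (H : SimpleGraph W) :
    SimpleGraph (V × W) where
  Adj p q := G.Adj p.1 q.1 ∨ (p.1 = q.1 ∧ H.Adj p.2 q.2)
  symm := by
    constructor
    rintro p q (h | ⟨h1, h2⟩)
    · exact Or.inl h.symm
    · exact Or.inr ⟨h1.symm, h2.symm⟩
  loopless := by
    constructor
    rintro p (h | ⟨-, h⟩)
    · exact G.irrefl h
    · exact H.irrefl h

/-- The adjacency relation of the corona product `G ∘ H`. -/
def coronaAdj {V W : Type*} (G : SimpleGraph V) (H : SimpleGraph W) :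
    V ⊕ V × W → V ⊕ V × W → Prop
  | Sum.inl g, Sum.inl g' => G.Adj g g'
  | Sum.inl g, Sum.inr p => g = p.1
  | Sum.inr p, Sum.inl g => p.1 = g
  | Sum.inr p, Sum.inr q => p.1 = q.1 ∧ H.Adj p.2 q.2

/-- The corona product `G ∘ H`: one copy of `G` and a copy of `H` for each vertex `g` of `G`,
with `g` joined to every vertex of its copy of `H`. -/
def corona {V W : Type*} (G : SimpleGraph V) (H : SimpleGraph W) :
    SimpleGraph (V ⊕ V × W) where
  Adj := coronaAdj G H
  symm := by
    constructor
    rintro (g | p) (g' | q) h <;> simp only [coronaAdj] at h ⊢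
    · exact h.symm
    · exact h.symm
    · exact h.symm
    · exact ⟨h.1.symm, h.2.symm⟩
  loopless := by
    constructor
    rintro (g | p) h <;> simp only [coronaAdj] at h
    · exact G.irrefl h
    · exact H.irrefl h.2


private lemma getVert_append_of_le {V : Type*} {G : SimpleGraph V} {u v w : V}
    (p : G.Walk u v) (q : G.Walk v w) {i : ℕ} (h : i ≤ p.length) :
    (p.append q).getVert i = p.getVert i := by
  rw [Walk.getVert_append]
  split
  · rfl
  · have hi : i = p.length := le_antisymm h (not_lt.mp ‹_›)
    subst hi
    simp [Walk.getVert_length]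

/-- If `u, v` are non-adjacent vertices of a finite connected non-complete graph
`G` and `x ∉ N[u] ∪ N[v]` is adjacent to some `y ∈ WT_G(u,v) \ {u,v}`, then
`x ∈ WT_G(u,v)`. -/
theorem mem_wtInterval_of_adj {V : Type*} [Fintype V] (G : SimpleGraph V)
    (hGc : G.Connected) (hGnc : G ≠ ⊤) (u v x : V)
    (huv : u ≠ v) (hnadj : ¬ G.Adj u v)
    (hx : x ∉ insert u (G.neighborSet u) ∪ insert v (G.neighborSet v))
    (hy : ∃ y ∈ wtInterval G u v, y ≠ u ∧ y ≠ v ∧ G.Adj x y) :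
    x ∈ wtInterval G u v := by
  obtain ⟨y, ⟨w, ⟨hw1, hw2⟩, hyw⟩, hyu, hyv, hxy⟩ := hy
  simp only [Set.mem_union, Set.mem_insert_iff, SimpleGraph.mem_neighborSet, not_or] at hx
  obtain ⟨⟨hxu, hux⟩, hxv, hvx⟩ := hx
  classical
  set w1 := w.takeUntil y hyw with hw1def
  set w2 := w.dropUntil y hyw with hw2def
  have hspec : w1.append w2 = w := w.take_spec hyw
  set r : G.Walk y v := Walk.cons hxy.symm (Walk.cons hxy w2) with hrdef
  set W : G.Walk u v := w1.append r with hWdef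
  have hl1 : 1 ≤ w1.length := by
    rcases Nat.eq_zero_or_pos w1.length with h0 | h
    · exfalso
      apply hyu
      have h1 : w1.getVert 0 = u := w1.getVert_zero
      have h2 : w1.getVert w1.length = y := w1.getVert_length
      rw [h0, h1] at h2
      exact h2.symm
    · exact h
  have hl2 : 1 ≤ w2.length := by
    rcases Nat.eq_zero_or_pos w2.length with h0 | h
    · exfalso
      apply hyv
      have h1 : w2.getVert 0 = y := w2.getVert_zero
      have h2 : w2.getVert w2.length = v := w2.getVert_length
      rw [h0, h1] at h2
      exact h2
    · exact h
  have hwlen : w.length = w1.length + w2.length := by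
    rw [← hspec, Walk.length_append]
  have hWlen : W.length = w1.length + w2.length + 2 := by
    simp only [hWdef, hrdef, Walk.length_append, Walk.length_cons]
    omega
  -- the second vertex of W equals the second vertex of w
  have hg1 : W.getVert 1 = w.getVert 1 := by
    rw [hWdef, getVert_append_of_le _ _ hl1, ← hspec, getVert_append_of_le _ _ hl1]
  -- the second-to-last vertex of W equals the second-to-last of w
  have hg2 : W.getVert (W.length - 1) = w.getVert (w.length - 1) := by
    obtain ⟨m, hm⟩ : ∃ m, w2.length = m + 1 := ⟨w2.length - 1, by omega⟩
    have hidx1 : W.length - 1 = w1.length + (m + 2) := by omega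
    have hidx2 : w.length - 1 = w1.length + m := by omega
    rw [hidx1, hidx2, hWdef, ← hspec, Walk.getVert_append, Walk.getVert_append,
        if_neg (by omega), if_neg (by omega), Nat.add_sub_cancel_left,
        Nat.add_sub_cancel_left, hrdef, Walk.getVert_cons_succ, Walk.getVert_cons_succ]
  -- support of W
  have hsub : ∀ z ∈ W.support, z = x ∨ z ∈ w.support := by
    intro z hz
    rw [hWdef, Walk.mem_support_append_iff] at hz
    rcases hz with hz | hz
    · right; exact w.support_takeUntil_subset hyw hz
    · simp only [hrdef, Walk.support_cons, List.mem_cons] at hz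
      rcases hz with rfl | rfl | hz
      · right; exact hyw
      · left; rfl
      · right; exact w.support_dropUntil_subset hyw hz
  refine ⟨W, ⟨?_, ?_⟩, ?_⟩
  · intro i hi hadj
    have hz : W.getVert i ∈ W.support := by
      rw [Walk.mem_support_iff_exists_getVert]
      exact ⟨i, rfl, hi⟩
    rcases hsub _ hz with he | he
    · exact absurd (he ▸ hadj) hux
    · rw [Walk.mem_support_iff_exists_getVert] at he
      obtain ⟨j, hj, hjl⟩ := he
      rw [hg1, ← hj]
      exact hw1 j hjl (hj ▸ hadj)
  · intro i hi hadj
    have hz : W.getVert i ∈ W.support := by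
      rw [Walk.mem_support_iff_exists_getVert]
      exact ⟨i, rfl, hi⟩
    rcases hsub _ hz with he | he
    · exact absurd (he ▸ hadj) (fun h => hvx h.symm)
    · rw [Walk.mem_support_iff_exists_getVert] at he
      obtain ⟨j, hj, hjl⟩ := he
      rw [hg2, ← hj]
      exact hw2 j hjl (hj ▸ hadj)
  · rw [hWdef, Walk.mem_support_append_iff]
    right
    simp [hrdef]
end

section
/- Let G and H be finite simple connected non-complete graphs and consider the corona product G ∘ H. Let g1, g2, g be vertices of G with g1 not adjacent to g2 in G. Then g ∈ WT_G(g1,g2) if and only if g ∈ WT_{G∘H}(g1,g2) (where g1, g2, g are regarded as vertices of G ∘ H via the inclusion of V(G) into V(G ∘ H)). -/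
open SimpleGraph

section Aux
variable {V W : Type*} {G : SimpleGraph V} {H : SimpleGraph W}

/-- projection to V -/
abbrev cproj : V ⊕ V × W → V := Sum.elim id Prod.fst

lemma corona_adj_proj {a b : V ⊕ V × W} (h : (corona G H).Adj a b)
    (hne : cproj a ≠ cproj b) : G.Adj (cproj a) (cproj b) := by
  rcases a with g | p <;> rcases b with g' | q <;>
    simp only [corona, coronaAdj] at h <;> simp only [cproj, Sum.elim_inl, Sum.elim_inr, id] at *
  · exact h
  · exact absurd h hne
  · exact absurd h hne
  · exact absurd h.1 hne

open Classical in
noncomputable def projWalk : ∀ {x y : V ⊕ V × W}, (corona G H).Walk x y → G.Walk (cproj x) (cproj y)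
  | _, _, .nil => .nil
  | x, _, .cons (v := z) h w =>
    if hp : cproj x = cproj z then
      (projWalk w).copy hp.symm rfl
    else
      Walk.cons (corona_adj_proj h hp) (projWalk w)

open Classical in
@[simp] lemma projWalk_nil {x : V ⊕ V × W} :
    projWalk (.nil : (corona G H).Walk x x) = .nil := rfl

open Classical in
lemma projWalk_cons {x z y : V ⊕ V × W} (h : (corona G H).Adj x z)
    (w : (corona G H).Walk z y) :
    projWalk (Walk.cons h w) =
      if hp : cproj x = cproj z then (projWalk w).copy hp.symm rfl
      else Walk.cons (corona_adj_proj h hp) (projWalk w) := rfl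

lemma projWalk_mem_support {x y : V ⊕ V × W} (w : (corona G H).Walk x y) :
    ∀ z ∈ w.support, cproj z ∈ (projWalk w).support := by
  induction w with
  | nil => intro z hz; simp at hz; subst hz; simp
  | cons h w ih =>
    intro z hz
    rw [Walk.support_cons, List.mem_cons] at hz
    rw [projWalk_cons]
    split_ifs with hp
    · rw [Walk.support_copy]
      rcases hz with rfl | hz
      · rw [hp]; exact Walk.start_mem_support _
      · exact ih z hz
    · rw [Walk.support_cons, List.mem_cons]
      rcases hz with rfl | hz
      · exact Or.inl rfl
      · exact Or.inr (ih z hz)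

lemma projWalk_support_sub {x y : V ⊕ V × W} (w : (corona G H).Walk x y) :
    ∀ a ∈ (projWalk w).support, ∃ z ∈ w.support, cproj z = a := by
  induction w with
  | nil =>
    intro a ha
    simp only [projWalk, Walk.support_nil, List.mem_singleton] at ha
    exact ⟨_, Walk.start_mem_support _, ha.symm⟩
  | cons h w ih =>
    intro a ha
    rw [projWalk_cons] at ha
    split_ifs at ha with hp
    · rw [Walk.support_copy] at ha
      obtain ⟨z, hz, rfl⟩ := ih a ha
      exact ⟨z, by simp [hz], rfl⟩
    · rw [Walk.support_cons, List.mem_cons] at ha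
      rcases ha with rfl | ha
      · exact ⟨_, by simp, rfl⟩
      · obtain ⟨z, hz, rfl⟩ := ih a ha
        exact ⟨z, by simp [hz], rfl⟩

lemma copy_exit_aux : ∀ {s y : V ⊕ V × W} (w : (corona G H).Walk s y)
    (p : V × W), Sum.inr p ∈ w.support →
    Sum.inl p.1 ∈ w.support ∨ ∃ h, y = Sum.inr (p.1, h) := by
  intro s y w
  induction w with
  | nil =>
    intro p hp
    simp only [Walk.support_nil, List.mem_singleton] at hp
    exact Or.inr ⟨p.2, hp.symm⟩
  | @cons s z _ h w ih =>
    intro p hp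
    rw [Walk.support_cons, List.mem_cons] at hp
    rcases hp with rfl | hp
    · rcases z with g | q
      · have hg : p.1 = g := h
        subst hg
        exact Or.inl (List.mem_cons_of_mem _ (Walk.start_mem_support w))
      · have h' : p.1 = q.1 := (h : p.1 = q.1 ∧ H.Adj p.2 q.2).1
        rcases ih q (Walk.start_mem_support w) with hq | ⟨hh, rfl⟩
        · rw [h']
          exact Or.inl (List.mem_cons_of_mem _ hq)
        · exact Or.inr ⟨hh, by rw [h']⟩
    · rcases ih p hp with hq | ⟨hh, rfl⟩
      · exact Or.inl (List.mem_cons_of_mem _ hq)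
      · exact Or.inr ⟨hh, rfl⟩

lemma copy_exit {t : V} {s : V ⊕ V × W} (w : (corona G H).Walk s (Sum.inl t))
    (p : V × W) (hp : Sum.inr p ∈ w.support) : Sum.inl p.1 ∈ w.support := by
  rcases copy_exit_aux w p hp with h | ⟨h, hc⟩
  · exact h
  · exact absurd hc (by simp)

lemma projWalk_length_le {x y : V ⊕ V × W} (w : (corona G H).Walk x y) :
    (projWalk w).length ≤ w.length := by
  induction w with
  | nil => simp
  | cons h w ih =>
    rw [projWalk_cons]
    split_ifs with hp
    · simp only [Walk.length_copy, Walk.length_cons]; omega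
    · simp only [Walk.length_cons]; omega

lemma projWalk_getVert_one {u : V} {y : V ⊕ V × W} (w : (corona G H).Walk (Sum.inl u) y)
    (x : V) (h1 : w.getVert 1 = Sum.inl x) (hx : x ≠ u) :
    (projWalk w).getVert 1 = x := by
  cases w with
  | nil => simp [Walk.getVert_of_length_le] at h1; exact absurd h1.symm hx
  | @cons _ z _ h w =>
    rw [Walk.getVert_cons_succ, Walk.getVert_zero] at h1
    subst h1
    rw [projWalk_cons]
    split_ifs with hp
    · exact absurd hp.symm (by simpa [cproj] using hx)
    · rw [Walk.getVert_cons_succ, Walk.getVert_zero]; rfl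

lemma projWalk_getVert_last : ∀ {s y : V ⊕ V × W} (w : (corona G H).Walk s y) (x : V),
    w.getVert (w.length - 1) = Sum.inl x → x ≠ cproj y →
    (projWalk w).getVert ((projWalk w).length - 1) = x ∧ 1 ≤ (projWalk w).length := by
  intro s y w
  induction w with
  | nil =>
    intro x hx hxy
    simp only [Walk.length_nil, Nat.zero_sub, Walk.getVert_zero] at hx
    exact absurd (by rw [hx]; rfl) hxy.symm
  | @cons s z y' h w ih =>
    intro x hx hxy
    by_cases hl : w.length = 0
    · have hzy : z = y' := by
        have := w.getVert_length
        rwa [hl, Walk.getVert_zero] at this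
      simp only [Walk.length_cons, hl, Nat.add_sub_cancel, Walk.getVert_zero] at hx
      subst hx
      subst hzy
      rw [projWalk_cons]
      split_ifs with hp
      · exact absurd hp hxy
      · constructor
        · have hle : (projWalk w).length = 0 := Nat.le_antisymm (hl ▸ projWalk_length_le w) (Nat.zero_le _)
          simp only [Walk.length_cons, hle, Nat.add_sub_cancel, Walk.getVert_zero]; rfl
        · simp only [Walk.length_cons]; omega
    · have hx' : w.getVert (w.length - 1) = Sum.inl x := by
        have : (Walk.cons h w).length - 1 = (w.length - 1) + 1 := by
          simp only [Walk.length_cons]; omega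
        rwa [this, Walk.getVert_cons_succ] at hx
      obtain ⟨ih1, ih2⟩ := ih x hx' hxy
      rw [projWalk_cons]
      split_ifs with hp
      · simp only [Walk.getVert_copy, Walk.length_copy]
        exact ⟨ih1, ih2⟩
      · constructor
        · have : (Walk.cons (corona_adj_proj h hp) (projWalk w)).length - 1
              = ((projWalk w).length - 1) + 1 := by
            simp only [Walk.length_cons]; omega
          rw [this, Walk.getVert_cons_succ]
          exact ih1
        · simp only [Walk.length_cons]; omega

lemma getVert_map' {V' : Type*} {G' : SimpleGraph V'} (f : G →g G') {u v : V}
    (w : G.Walk u v) : ∀ i, (w.map f).getVert i = f (w.getVert i) := by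
  induction w with
  | nil => intro i; simp [Walk.getVert_of_length_le]
  | cons h w ih =>
    intro i
    cases i with
    | zero => simp
    | succ n => rw [Walk.map_cons, Walk.getVert_cons_succ, Walk.getVert_cons_succ]; exact ih n

end Aux

/-- In the corona product of finite connected non-complete graphs `G`, `H`,
for vertices `g1, g2, g` of `G` with `g1`, `g2` non-adjacent in `G`,
`g ∈ WT_G(g1,g2)` iff `g ∈ WT_{G∘H}(g1,g2)`. -/
theorem mem_wtInterval_corona_iff {V W : Type*} [Fintype V] [Fintype W]
    (G : SimpleGraph V) (H : SimpleGraph W)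
    (hGc : G.Connected) (hHc : H.Connected)
    (hGnc : G ≠ ⊤) (hHnc : H ≠ ⊤)
    (g1 g2 g : V) (hnadj : ¬ G.Adj g1 g2) :
    g ∈ wtInterval G g1 g2 ↔
      (Sum.inl g : V ⊕ V × W) ∈ wtInterval (corona G H) (Sum.inl g1) (Sum.inl g2) := by

  constructor
  · rintro ⟨w, ⟨h1, h2⟩, hg⟩
    refine ⟨w.map ⟨Sum.inl, fun {a b} h => h⟩, ⟨?_, ?_⟩, ?_⟩
    · intro i hi hadj
      rw [Walk.length_map] at hi
      rw [getVert_map'] at hadj ⊢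
      rw [getVert_map']
      exact congrArg Sum.inl (h1 i hi hadj)
    · intro i hi hadj
      rw [Walk.length_map] at hi ⊢
      rw [getVert_map'] at hadj ⊢
      rw [getVert_map']
      exact congrArg Sum.inl (h2 i hi hadj)
    · rw [Walk.support_map]
      exact List.mem_map_of_mem hg
  · rintro ⟨w, ⟨h1, h2⟩, hg⟩
    have key : ∀ x ∈ (projWalk w).support, Sum.inl x ∈ w.support := by
      intro x hx
      obtain ⟨z, hz, hzx⟩ := projWalk_support_sub w x hx
      rcases z with a | p
      · exact hzx ▸ hz
      · exact hzx ▸ copy_exit w p hz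
    refine ⟨projWalk w, ⟨?_, ?_⟩, projWalk_mem_support w _ hg⟩
    · intro i hi hadj
      have hxs : (projWalk w).getVert i ∈ (projWalk w).support :=
        Walk.mem_support_iff_exists_getVert.2 ⟨i, rfl, hi⟩
      obtain ⟨j, hj1, hj2⟩ := Walk.mem_support_iff_exists_getVert.1 (key _ hxs)
      have h1x : w.getVert 1 = Sum.inl ((projWalk w).getVert i) := by
        rw [← h1 j hj2 (by rw [hj1]; exact hadj), hj1]
      exact (projWalk_getVert_one w _ h1x hadj.ne').symm
    · intro i hi hadj
      have hxs : (projWalk w).getVert i ∈ (projWalk w).support :=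
        Walk.mem_support_iff_exists_getVert.2 ⟨i, rfl, hi⟩
      obtain ⟨j, hj1, hj2⟩ := Walk.mem_support_iff_exists_getVert.1 (key _ hxs)
      have hlast : w.getVert (w.length - 1) = Sum.inl ((projWalk w).getVert i) := by
        rw [← h2 j hj2 (by rw [hj1]; exact hadj), hj1]
      exact (projWalk_getVert_last w _ hlast hadj.ne).1.symm
end
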